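/- Let Σ₀ be an SPD real n×n matrix, let L be an invertible real n×n matrix, and let O be an orthogonal real n×n matrix (O Oᵀ = I). Then ((L O)ᵀ)⁻¹ · √((L O)ᵀ Σ₀ (L O)) · (L O)⁻¹ = (Lᵀ)⁻¹ · √(Lᵀ Σ₀ L) · L⁻¹. Hence the matrix Λ = (1/2)(Lᵀ)⁻¹ √(Lᵀ Σ₀ L) L⁻¹ depends on the order-flow covariance Ω = L Lᵀ only, not on the choice of the square-root factor L. -/

import Mathlib

/-! Orthogonal conjugation commutes with the positive semidefinite square root, by uniqueness of
that root: `Oᵀ √M O` is positive semidefinite and squares to `Oᵀ M O`. Replacing `L` by `L O`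
conjugates `M = Lᵀ Σ₀ L` by `O`, and the factors `O`, `Oᵀ` cancel against those of the inverses. -/

open Matrix
open Classical in
/-- The unique positive semidefinite square root of a positive semidefinite
real matrix (defined as `0` on matrices that are not positive semidefinite). -/
noncomputable def psdSqrt {n : ℕ} (A : Matrix (Fin n) (Fin n) ℝ) : Matrix (Fin n) (Fin n) ℝ :=
  if h : A.PosSemidef then
    (h.1.eigenvectorUnitary : Matrix (Fin n) (Fin n) ℝ) *
      diagonal ((RCLike.ofReal : ℝ → ℝ) ∘ (√·) ∘ h.1.eigenvalues) *
      (star h.1.eigenvectorUnitary : Matrix (Fin n) (Fin n) ℝ)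
  else 0

theorem CFC.sqrt_star_left_conjugate {A : Type*} [PartialOrder A] [Ring A] [TopologicalSpace A]
    [StarRing A] [Module ℝ A] [SMulCommClass ℝ A A] [IsScalarTower ℝ A A] [StarOrderedRing A]
    [NonUnitalContinuousFunctionalCalculus ℝ A IsSelfAdjoint] [NonnegSpectrumClass ℝ A]
    [IsSemitopologicalRing A] [T2Space A] {u : A} (hu : u * star u = 1) {a : A} (ha : 0 ≤ a) :
    CFC.sqrt (star u * a * u) = star u * CFC.sqrt a * u := by
  refine CFC.sqrt_unique ?_ (star_left_conjugate_nonneg (CFC.sqrt_nonneg a) u)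
  calc star u * CFC.sqrt a * u * (star u * CFC.sqrt a * u)
      = star u * (CFC.sqrt a * (u * star u) * CFC.sqrt a) * u := by noncomm_ring
    _ = star u * a * u := by rw [hu, mul_one, CFC.sqrt_mul_sqrt_self a ha]

open scoped MatrixOrder in
theorem psdSqrt_eq_cfcSqrt {n : ℕ} (A : Matrix (Fin n) (Fin n) ℝ) : psdSqrt A = CFC.sqrt A := by
  by_cases h : A.PosSemidef
  · rw [psdSqrt, dif_pos h, CFC.sqrt_eq_cfc, cfc_nnreal_eq_real _ A h.nonneg, h.1.cfc_eq]
    simp [IsHermitian.cfc, Unitary.conjStarAlgAut_apply, Function.comp_def, h.eigenvalues_nonneg]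
  · rw [psdSqrt, dif_neg h, CFC.sqrt_of_not_nonneg (mt LE.le.posSemidef h)]

open scoped MatrixOrder in
theorem psdSqrt_transpose_mul_mul_same {n : ℕ} {A O : Matrix (Fin n) (Fin n) ℝ}
    (hA : A.PosSemidef) (hO : O * Oᵀ = 1) : psdSqrt (Oᵀ * A * O) = Oᵀ * psdSqrt A * O := by
  simp only [psdSqrt_eq_cfcSqrt]
  exact CFC.sqrt_star_left_conjugate hO hA.nonneg

theorem stmt17_general {n : ℕ} (S0 L O : Matrix (Fin n) (Fin n) ℝ)
    (hS0 : S0.PosDef) (hO : O * Oᵀ = 1) :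
    ((L * O)ᵀ)⁻¹ * psdSqrt ((L * O)ᵀ * S0 * (L * O)) * (L * O)⁻¹ =
      (Lᵀ)⁻¹ * psdSqrt (Lᵀ * S0 * L) * L⁻¹ := by
  have hM : (Lᵀ * S0 * L).PosSemidef := by
    simpa using hS0.posSemidef.conjTranspose_mul_mul_same L
  have hconj : (L * O)ᵀ * S0 * (L * O) = Oᵀ * (Lᵀ * S0 * L) * O := by
    simp only [transpose_mul, Matrix.mul_assoc]
  rw [hconj, psdSqrt_transpose_mul_mul_same hM hO, transpose_mul, Matrix.mul_inv_rev,
    Matrix.mul_inv_rev, inv_eq_left_inv hO, inv_eq_right_inv hO]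
  calc (Lᵀ)⁻¹ * O * (Oᵀ * psdSqrt (Lᵀ * S0 * L) * O) * (Oᵀ * L⁻¹)
      = (Lᵀ)⁻¹ * (O * Oᵀ * psdSqrt (Lᵀ * S0 * L) * (O * Oᵀ)) * L⁻¹ := by
        simp only [Matrix.mul_assoc]
    _ = (Lᵀ)⁻¹ * psdSqrt (Lᵀ * S0 * L) * L⁻¹ := by rw [hO, Matrix.one_mul, Matrix.mul_one]

/-- Independence of the Kyle impact matrix from the choice of square-root factor of the
order-flow covariance: for SPD `Σ₀`, invertible `L` and orthogonal `O`,
`((L O)ᵀ)⁻¹ √((L O)ᵀ Σ₀ (L O)) (L O)⁻¹ = (Lᵀ)⁻¹ √(Lᵀ Σ₀ L) L⁻¹`. -/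
theorem stmt17 {n : ℕ} (S0 L O : Matrix (Fin n) (Fin n) ℝ)
    (hS0 : S0.PosDef) (hL : IsUnit L.det) (hO : O * Oᵀ = 1) :
    ((L * O)ᵀ)⁻¹ * psdSqrt ((L * O)ᵀ * S0 * (L * O)) * (L * O)⁻¹ =
      (Lᵀ)⁻¹ * psdSqrt (Lᵀ * S0 * L) * L⁻¹ :=
  stmt17_general S0 L O hS0 hO
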